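/- arXiv:2407.07903 — 2 statements merged into one kernel-verified Lean document; each statement's English description precedes it below -/
import Mathlib

section
/- Let m be odd with m ≤ k. Suppose {0,1}^k admits a Hamiltonian cycle in which consecutive vertices are at Hamming distance exactly m. Then {0,1}^(k+1) also admits such a Hamiltonian cycle (with consecutive vertices at Hamming distance m). -/
open Finset

lemma snoc_hd {k : ℕ} (x y : Fin k → Bool) (a b : Bool) :
    hammingDist (Fin.snoc x a : Fin (k+1) → Bool) (Fin.snoc y b : Fin (k+1) → Bool) =
      hammingDist x y + (if a = b then 0 else 1) := by
  classical
  simp only [hammingDist, Finset.card_filter]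
  rw [Fin.sum_univ_castSucc]
  simp only [Fin.snoc_castSucc, Fin.snoc_last]
  by_cases hab : a = b <;> simp [hab]

lemma flip_hd {k t : ℕ} (x y : Fin k → Bool) :
    hammingDist (fun i : Fin k => if i.val < t then !(x i) else x i)
      (fun i : Fin k => if i.val < t then !(y i) else y i) = hammingDist x y := by
  classical
  simp only [hammingDist]
  congr 1
  ext i
  by_cases hi : i.val < t <;> simp [hi] <;> cases x i <;> cases y i <;> simp

lemma card_filter_lt {k t : ℕ} (h : t ≤ k) :
    (Finset.univ.filter (fun i : Fin k => i.val < t)).card = t := by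
  have e : (Finset.univ.filter (fun i : Fin k => i.val < t)) =
      Finset.map (Fin.castLEEmb h) Finset.univ := by
    ext i
    simp only [mem_filter, mem_univ, true_and, mem_map, Fin.castLEEmb_apply]
    constructor
    · intro hi; exact ⟨⟨i, hi⟩, rfl⟩
    · rintro ⟨j, rfl⟩; exact j.2
  rw [e, Finset.card_map, Finset.card_univ, Fintype.card_fin]

lemma self_flip_hd {k t : ℕ} (h : t ≤ k) (x : Fin k → Bool) :
    hammingDist x (fun i : Fin k => if i.val < t then !(x i) else x i) = t := by
  classical
  simp only [hammingDist]
  convert card_filter_lt h using 2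
  ext i
  by_cases hi : i.val < t <;> cases x i <;> simp [hi]
theorem stmt_10 (k m : ℕ) (hm : Odd m) (hmk : m ≤ k)
    (h : ∃ f : ZMod (2 ^ k) → (Fin k → Bool), Function.Bijective f ∧
      ∀ i, hammingDist (f i) (f (i + 1)) = m) :
    ∃ g : ZMod (2 ^ (k + 1)) → (Fin (k + 1) → Bool), Function.Bijective g ∧
      ∀ i, hammingDist (g i) (g (i + 1)) = m := by
  classical
  have hm1 : 1 ≤ m := hm.pos
  have hk1 : 1 ≤ k := le_trans hm1 hmk
  have hN2 : 2 ≤ 2 ^ k := by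
    calc 2 = 2 ^ 1 := rfl
    _ ≤ 2 ^ k := Nat.pow_le_pow_right (by norm_num) hk1
  have hNN : 2 ^ (k + 1) = 2 * 2 ^ k := by ring
  have h2N : (4 : ℕ) ≤ 2 ^ (k + 1) := by omega
  haveI : NeZero (2 ^ (k + 1)) := ⟨by positivity⟩
  haveI : Fact (1 < 2 ^ (k + 1)) := ⟨by omega⟩
  haveI : NeZero (2 ^ k) := ⟨by positivity⟩
  set N := 2 ^ k with hNdef
  obtain ⟨f, hfb, hfd⟩ := h
  set σ : (Fin k → Bool) → (Fin k → Bool) :=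
    fun x => fun i : Fin k => if i.val < m - 1 then !(x i) else x i with hσ
  have hσd : ∀ x y, hammingDist (σ x) (σ y) = hammingDist x y := fun x y => flip_hd x y
  have hσs : ∀ x, hammingDist x (σ x) = m - 1 := fun x =>
    self_flip_hd (by omega) x
  have hσinj : Function.Injective σ := by
    intro x y hxy
    funext i
    have := congrFun hxy i
    simp only [hσ] at this
    by_cases hi : i.val < m - 1 <;> simp [hi] at this <;> simpa using this
  set g : ZMod (2 ^ (k + 1)) → (Fin (k + 1) → Bool) := fun j =>
    if j.val < N then Fin.snoc (f ((j.val : ℕ) : ZMod N)) false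
    else Fin.snoc (σ (f ((2 * N - 1 - j.val : ℕ) : ZMod N))) true with hg
  have hval : ∀ j : ZMod (2 ^ (k + 1)), j.val < 2 * N := fun j => by
    have := ZMod.val_lt j; omega
  refine ⟨g, ?_, ?_⟩
  · rw [Fintype.bijective_iff_injective_and_card]
    constructor
    · intro j j' hjj'
      have hlast := congrFun hjj' (Fin.last k)
      have hinit : ∀ (x y : Fin k → Bool) (a b : Bool),
          (Fin.snoc x a : Fin (k+1) → Bool) = Fin.snoc y b → x = y := by
        intro x y a b hxy
        funext i
        have := congrFun hxy i.castSucc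
        simpa using this
      by_cases h1 : j.val < N <;> by_cases h2 : j'.val < N <;>
        simp only [hg, h1, h2, if_pos, if_neg, if_true, if_false, Fin.snoc_last] at hjj' hlast
      · have hxy := hinit _ _ _ _ hjj'
        have := hfb.1 hxy
        have hv : j.val = j'.val := by
          have := congrArg ZMod.val this
          rwa [ZMod.val_cast_of_lt h1, ZMod.val_cast_of_lt h2] at this
        exact ZMod.val_injective _ hv
      · simp at hlast
      · simp at hlast
      · have hxy := hinit _ _ _ _ hjj'
        have := hfb.1 (hσinj hxy)
        have hlt1 : 2 * N - 1 - j.val < N := by have := hval j; omega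
        have hlt2 : 2 * N - 1 - j'.val < N := by have := hval j'; omega
        have hv : j.val = j'.val := by
          have := congrArg ZMod.val this
          rw [ZMod.val_cast_of_lt hlt1, ZMod.val_cast_of_lt hlt2] at this
          have := hval j; have := hval j'; omega
        exact ZMod.val_injective _ hv
    · simp [ZMod.card]
  · intro i
    have hvlt := hval i
    have hsucc : (i + 1).val = (i.val + 1) % (2 * N) := by
      rw [ZMod.val_add, ZMod.val_one, ← hNN]
    by_cases hlast : i.val + 1 = 2 * N
    · -- wrap-around: i.val = 2N - 1
      have h1 : ¬ i.val < N := by omega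
      have h2 : (i + 1).val = 0 := by rw [hsucc, hlast, Nat.mod_self]
      have h3 : (i + 1).val < N := by omega
      have h4 : 2 * N - 1 - i.val = 0 := by omega
      simp only [hg, if_neg h1, if_pos h3, h2, h4]
      rw [snoc_hd, Nat.cast_zero, hammingDist_comm, hσs]
      simp; omega
    · have h5 : (i + 1).val = i.val + 1 := by
        rw [hsucc]; exact Nat.mod_eq_of_lt (by omega)
      by_cases h1 : i.val < N
      · by_cases h2 : i.val + 1 < N
        · -- both in first half
          simp only [hg, if_pos h1, h5, if_pos h2]
          rw [snoc_hd, Nat.cast_add, Nat.cast_one]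
          simpa using hfd _
        · -- crossing: i.val = N - 1
          have h6 : i.val = N - 1 := by omega
          have h7 : ¬ (i + 1).val < N := by omega
          have h8 : 2 * N - 1 - (i + 1).val = i.val := by omega
          simp only [hg, if_pos h1, if_neg h7, h8]
          rw [snoc_hd, hσs]
          simp; omega
      · -- both in second half
        have h7 : ¬ (i + 1).val < N := by omega
        have h9 : 2 * N - 1 - i.val = (2 * N - 1 - (i + 1).val) + 1 := by omega
        simp only [hg, if_neg h1, if_neg h7, h9]
        rw [snoc_hd, Nat.cast_add, Nat.cast_one, hσd, hammingDist_comm]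
        simpa using hfd _
end

section
/- If a Hamiltonian cycle of the threeleaper exists on {0,1}^11 (consecutive vertices at Hamming distance 9), then for every k ≥ 11 a Hamiltonian cycle of the threeleaper exists on {0,1}^k. -/
/-!
Induction on the dimension. Given a Hamiltonian path `p` of the distance-`(d + 1)` graph on
`{0,1}^k` (the cycle with one edge removed), traverse `0p` forwards and then `1σp` backwards,
where `σ` flips a fixed set of `d` coordinates. As `σ` is an isometry the edges inside each half
have length `d + 1`, and the two joining edges `0p(v) — 1σp(v)` change the new coordinate and
the `d` flipped ones.
-/

open Finset Function

section Flip

variable {ι : Type*} [DecidableEq ι]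

def flipOn (S : Finset ι) (x : ι → Bool) : ι → Bool := fun i => if i ∈ S then !x i else x i

lemma flipOn_involutive (S : Finset ι) : Involutive (flipOn S) := by
  intro x; funext i; by_cases hi : i ∈ S <;> simp [flipOn, hi]

variable [Fintype ι]

lemma hammingDist_flipOn (S : Finset ι) (x y : ι → Bool) :
    hammingDist (flipOn S x) (flipOn S y) = hammingDist x y :=
  hammingDist_comp (fun i b => if i ∈ S then !b else b) fun i => by
    by_cases hi : i ∈ S <;> simp [hi, Injective]

lemma hammingDist_flipOn_right (S : Finset ι) (x : ι → Bool) :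
    hammingDist x (flipOn S x) = #S := by
  unfold hammingDist; congr 1; ext i; by_cases hi : i ∈ S <;> simp [flipOn, hi]

end Flip

lemma hammingDist_cons_cons {α : Type*} [DecidableEq α] {k : ℕ} (a b : α) (x y : Fin k → α) :
    hammingDist (Fin.cons a x : Fin (k + 1) → α) (Fin.cons b y) =
      (if a = b then 0 else 1) + hammingDist x y := by
  simp only [hammingDist, card_filter, Fin.sum_univ_succ, Fin.cons_zero, Fin.cons_succ, ite_not]

lemma ZMod.val_add_one {N : ℕ} [NeZero N] (i : ZMod N) : (i + 1).val = (i.val + 1) % N := by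
  rw [← ZMod.val_natCast, Nat.cast_succ, ZMod.natCast_zmod_val]

lemma exists_cycle_of_path {α : Type*} [Fintype α] {M : ℕ} [NeZero M] (r : α → α → Prop)
    (p : ℕ → α) (hcard : Fintype.card α = M) (hinj : Set.InjOn p (Set.Iio M))
    (hstep : ∀ n, n + 1 < M → r (p n) (p (n + 1))) (hclose : r (p (M - 1)) (p 0)) :
    ∃ g : ZMod M → α, Bijective g ∧ ∀ i, r (g i) (g (i + 1)) := by
  refine ⟨fun i => p i.val, ?_, fun i => ?_⟩
  · refine (Fintype.bijective_iff_injective_and_card _).2 ⟨fun i j hij => ?_, by simp [hcard]⟩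
    exact ZMod.val_injective M (hinj (ZMod.val_lt i) (ZMod.val_lt j) hij)
  · show r (p i.val) (p (i + 1).val)
    rw [ZMod.val_add_one]
    rcases Nat.lt_or_ge (i.val + 1) M with hi | hi
    · rw [Nat.mod_eq_of_lt hi]
      exact hstep _ hi
    · have hlast : i.val + 1 = M := le_antisymm (ZMod.val_lt i) hi
      rwa [hlast, Nat.mod_self, show i.val = M - 1 by omega]

lemma Function.Injective.injOn_comp_natCast {α : Type*} {N : ℕ} {f : ZMod N → α}
    (hf : Injective f) :
    Set.InjOn (fun n : ℕ => f n) (Set.Iio N) := fun m hm n hn hmn => by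
  simpa [ZMod.val_cast_of_lt hm, ZMod.val_cast_of_lt hn] using congrArg ZMod.val (hf hmn)

section Doubling

variable {k : ℕ}

def doublePath (N : ℕ) (S : Finset (Fin k)) (p : ℕ → Fin k → Bool) (n : ℕ) : Fin (k + 1) → Bool :=
  if n < N then Fin.cons false (p n) else Fin.cons true (flipOn S (p (2 * N - 1 - n)))

variable {N : ℕ} {S : Finset (Fin k)} {p : ℕ → Fin k → Bool}

lemma doublePath_injOn (hp : Set.InjOn p (Set.Iio N)) :
    Set.InjOn (doublePath N S p) (Set.Iio (2 * N)) := by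
  intro m hm n hn hmn
  simp only [Set.mem_Iio] at hm hn
  unfold doublePath at hmn
  split_ifs at hmn with hmN hnN hnN
  · exact hp hmN hnN (Fin.cons_injective2 hmn).2
  · exact absurd (Fin.cons_injective2 hmn).1 (by decide)
  · exact absurd (Fin.cons_injective2 hmn).1 (by decide)
  · have hflip := (flipOn_involutive S).injective (Fin.cons_injective2 hmn).2
    have := hp (by simp only [Set.mem_Iio]; omega) (by simp only [Set.mem_Iio]; omega) hflip
    omega

lemma hammingDist_doublePath_succ {d : ℕ} (hS : #S = d)
    (hp : ∀ n, n + 1 < N → hammingDist (p n) (p (n + 1)) = d + 1) {n : ℕ} (hn : n + 1 < 2 * N) :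
    hammingDist (doublePath N S p n) (doublePath N S p (n + 1)) = d + 1 := by
  unfold doublePath
  rcases lt_trichotomy (n + 1) N with h | h | h
  · simp [h, Nat.lt_of_succ_lt h, hammingDist_cons_cons, hp n h]
  · subst h
    simp [show 2 * (n + 1) - 1 - (n + 1) = n by omega, hammingDist_cons_cons,
      hammingDist_flipOn_right, hS, add_comm]
  · have hsucc : 2 * N - 1 - n = 2 * N - 1 - (n + 1) + 1 := by omega
    simp [show ¬ n < N by omega, show ¬ n + 1 < N by omega, hsucc, hammingDist_cons_cons,
      hammingDist_flipOn, hammingDist_comm, hp _ (by omega : 2 * N - 1 - (n + 1) + 1 < N)]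

lemma hammingDist_doublePath_last {d : ℕ} (hS : #S = d) (hN : 0 < N) :
    hammingDist (doublePath N S p (2 * N - 1)) (doublePath N S p 0) = d + 1 := by
  simp [doublePath, hN, show ¬ 2 * N - 1 < N by omega, hammingDist_cons_cons,
    hammingDist_comm _ (p 0), hammingDist_flipOn_right, hS, add_comm]

end Doubling

def HasHammingCycle (k d : ℕ) : Prop :=
  ∃ f : ZMod (2 ^ k) → (Fin k → Bool), Bijective f ∧ ∀ i, hammingDist (f i) (f (i + 1)) = d

theorem HasHammingCycle.succ {k d : ℕ} (hd : d ≤ k) (h : HasHammingCycle k (d + 1)) :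
    HasHammingCycle (k + 1) (d + 1) := by
  obtain ⟨f, hf, hdist⟩ := h
  obtain ⟨S, -, hS⟩ := exists_subset_card_eq (s := (univ : Finset (Fin k))) (by simpa using hd)
  unfold HasHammingCycle
  have hpath (n : ℕ) : hammingDist (f n) (f (n + 1 : ℕ)) = d + 1 := by
    simpa using hdist n
  rw [pow_succ']
  exact exists_cycle_of_path (hammingDist · · = d + 1) (doublePath (2 ^ k) S fun n => f n)
    (by simp [pow_succ']) (doublePath_injOn hf.1.injOn_comp_natCast)
    (fun n => hammingDist_doublePath_succ hS fun n _ => hpath n)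
    (hammingDist_doublePath_last hS (Nat.two_pow_pos k))

theorem stmt_12
    (h : ∃ f : ZMod (2 ^ 11) → (Fin 11 → Bool), Function.Bijective f ∧
      ∀ i, hammingDist (f i) (f (i + 1)) = 9) :
    ∀ k : ℕ, 11 ≤ k → ∃ g : ZMod (2 ^ k) → (Fin k → Bool), Function.Bijective g ∧
      ∀ i, hammingDist (g i) (g (i + 1)) = 9 := by
  intro k hk
  induction k, hk using Nat.le_induction with
  | base => exact h
  | succ k _ ih => exact HasHammingCycle.succ (d := 8) (by omega) ih
end
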